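/- Let C be the \binom{n}{r-1} \times \binom{n}{r} inclusion matrix whose rows are indexed by (r-1)-subsets and columns by r-subsets of an n-set, with C_{y,x} = 1 iff y \subseteq x. If r \le (n+1)/2, then C has full rank \binom{n}{r-1}. -/

import Mathlib

/-- The inclusion matrix between `(r-1)`-subsets and `r`-subsets of an `n`-set. -/
def inclusionMatrix (n r : ℕ) :
    Matrix {s : Finset (Fin n) // s.card = r - 1} {s : Finset (Fin n) // s.card = r} ℚ :=
  fun y x => if y.1 ⊆ x.1 then 1 else 0

/-!
Write `W_k` for the inclusion matrix of `k`-sets into `(k+1)`-sets of an `n`-set. Counting the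
`(k+1)`-sets above two `k`-sets `y, y'` and the `(k-1)`-sets below them gives the Gram identity
`W_k W_kᵀ = W_{k-1}ᵀ W_{k-1} + (n - 2k) I`. For `2k < n` the right-hand side is positive definite,
so `W_k W_kᵀ`, and hence `W_k`, has rank equal to the number of `k`-sets.
-/

open Finset Matrix

variable {α R : Type*}

def subsetMatrix [DecidableEq α] (R : Type*) [Zero R] [One R] (p q : Finset α → Prop) :
    Matrix {s // p s} {t // q t} R :=
  fun s t => if s.1 ⊆ t.1 then 1 else 0

section Gram

variable [Fintype α] [DecidableEq α] [Semiring R] {p p' q : Finset α → Prop}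

omit [DecidableEq α] in
theorem sum_subtype_boole [DecidablePred q] (P : Finset α → Prop) [DecidablePred P] :
    ∑ t : {t // q t}, (if P t.1 then (1 : R) else 0) = #{t | q t ∧ P t} := by
  rw [← subtype_univ, sum_subtype_eq_sum_filter (f := fun t => if P t then (1 : R) else 0),
    sum_boole, filter_filter]

theorem subsetMatrix_mul_transpose_apply [DecidablePred q] (s : {s // p s}) (s' : {s // p' s}) :
    (subsetMatrix R p q * (subsetMatrix R p' q)ᵀ) s s' = #{t | q t ∧ s.1 ∪ s'.1 ⊆ t} := by
  simp only [mul_apply, transpose_apply, subsetMatrix, ite_zero_mul_ite_zero, mul_one,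
    union_subset_iff]
  exact sum_subtype_boole fun t => s.1 ⊆ t ∧ s'.1 ⊆ t

theorem transpose_mul_subsetMatrix_apply [DecidablePred p] (t : {t // q t}) (t' : {t // p' t}) :
    ((subsetMatrix R p q)ᵀ * subsetMatrix R p p') t t' = #{s | p s ∧ s ⊆ t.1 ∩ t'.1} := by
  simp only [mul_apply, transpose_apply, subsetMatrix, ite_zero_mul_ite_zero, mul_one,
    subset_inter_iff]
  exact sum_subtype_boole fun s => s ⊆ t.1 ∧ s ⊆ t'.1

end Gram

section Counting

variable [Fintype α] [DecidableEq α]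

theorem card_filter_card_eq_superset {w : Finset α} {m : ℕ} (hm : #w ≤ m) :
    #{t | #t = m ∧ w ⊆ t} = (Fintype.card α - #w).choose (m - #w) := by
  have := card_filter_powersetCard_subset w univ m (subset_univ w) hm
  rw [card_univ] at this
  convert this using 2
  ext t
  simp only [mem_filter, mem_univ, true_and, mem_powersetCard_univ]

theorem card_filter_card_add_one_eq_subset (w : Finset α) {k : ℕ} (hk : 0 < k) :
    #{z | #z + 1 = k ∧ z ⊆ w} = (#w).choose (k - 1) := by
  have hcard (z : Finset α) : #z + 1 = k ↔ #z = k - 1 := by omega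
  rw [← card_powersetCard]
  congr 1
  ext z
  simp only [mem_filter, mem_univ, true_and, mem_powersetCard, hcard, and_comm]

theorem card_filter_card_add_one_eq_subset_self (y : Finset α) :
    #{z | #z + 1 = #y ∧ z ⊆ y} = #y := by
  rcases (#y).eq_zero_or_pos with hy | hy
  · simp [hy]
  · rw [card_filter_card_add_one_eq_subset y hy, Nat.choose_symm_of_eq_add (b := 1) (by omega),
      Nat.choose_one_right]

theorem card_filter_card_eq_superset_union_eq_subset_inter {y y' : Finset α} {k : ℕ}
    (hy : #y = k) (hy' : #y' = k) (hne : y ≠ y') :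
    #{t | #t = k + 1 ∧ y ∪ y' ⊆ t} = #{z | #z + 1 = k ∧ z ⊆ y ∩ y'} := by
  have hsum : #(y ∪ y') + #(y ∩ y') = 2 * k := by
    rw [card_union_add_card_inter]; omega
  have hlt : #(y ∩ y') < k := by
    refine hy ▸ card_lt_card (ssubset_of_subset_of_ne inter_subset_left fun h => hne ?_)
    exact eq_of_subset_of_card_le (h ▸ inter_subset_right) (by omega)
  rw [card_filter_card_add_one_eq_subset _ (by omega)]
  by_cases hc : #(y ∩ y') + 1 = k
  · rw [card_filter_card_eq_superset (by omega), show k + 1 - #(y ∪ y') = 0 by omega,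
      show k - 1 = #(y ∩ y') by omega, Nat.choose_zero_right, Nat.choose_self]
  · rw [Nat.choose_eq_zero_of_lt (by omega), card_eq_zero, filter_eq_empty_iff]
    rintro t - ⟨ht, hsub⟩
    have := card_le_card hsub
    omega

end Counting

/-- The lower factor is indexed by `#z + 1 = k` rather than `#z = k - 1`, so that it is empty
(and not the `1 × 1` matrix of `∅ ⊆ ∅`) when `k = 0`. -/
theorem subsetMatrix_mul_transpose_eq [Fintype α] [DecidableEq α] [Ring R] (k : ℕ) :
    subsetMatrix R (fun s : Finset α => #s = k) (#· = k + 1) *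
        (subsetMatrix R (fun s : Finset α => #s = k) (#· = k + 1))ᵀ =
      (subsetMatrix R (fun z : Finset α => #z + 1 = k) (#· = k))ᵀ *
          subsetMatrix R (fun z : Finset α => #z + 1 = k) (#· = k) +
        ((Fintype.card α : R) - 2 * k) • 1 := by
  ext y y'
  rw [subsetMatrix_mul_transpose_apply, Matrix.add_apply, transpose_mul_subsetMatrix_apply,
    Matrix.smul_apply, one_apply]
  by_cases h : y = y'
  · subst h
    obtain ⟨y, rfl⟩ := y
    rw [union_self, inter_self, card_filter_card_eq_superset le_self_add,
      card_filter_card_add_one_eq_subset_self, add_tsub_cancel_left, Nat.choose_one_right,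
      if_pos rfl, smul_eq_mul, mul_one]
    push_cast [card_le_univ y]
    rw [two_mul]
    abel
  · rw [card_filter_card_eq_superset_union_eq_subset_inter y.2 y'.2 (Subtype.coe_ne_coe.2 h),
      if_neg h, smul_zero, add_zero]

theorem dotProduct_self_nonneg {ι : Type*} [Fintype ι] [Ring R] [LinearOrder R]
    [IsStrictOrderedRing R] (v : ι → R) : 0 ≤ v ⬝ᵥ v :=
  Fintype.sum_nonneg fun i => mul_self_nonneg (v i)

theorem rank_transpose_mul_self_add_smul_one {m n : Type*} [Fintype m] [Fintype n]
    [DecidableEq n] [Field R] [LinearOrder R] [IsStrictOrderedRing R] (B : Matrix m n R)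
    {c : R} (hc : 0 < c) : (Bᵀ * B + c • 1).rank = Fintype.card n := by
  refine rank_of_isUnit _ ((isUnit_iff_isUnit_det _).2 (isUnit_iff_ne_zero.2 fun hdet => ?_))
  obtain ⟨v, hv, hker⟩ := exists_mulVec_eq_zero_iff.2 hdet
  have hquad : v ⬝ᵥ ((Bᵀ * B + c • 1) *ᵥ v) = (B *ᵥ v) ⬝ᵥ (B *ᵥ v) + c * (v ⬝ᵥ v) := by
    rw [add_mulVec, dotProduct_add, ← mulVec_mulVec, dotProduct_mulVec v Bᵀ, vecMul_transpose,
      smul_mulVec, one_mulVec, dotProduct_smul, smul_eq_mul]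
  rw [hker, dotProduct_zero] at hquad
  have hzero : v ⬝ᵥ v = 0 :=
    le_antisymm (by nlinarith [dotProduct_self_nonneg (B *ᵥ v)]) (dotProduct_self_nonneg v)
  exact hv (dotProduct_self_eq_zero.1 hzero)

theorem rank_subsetMatrix_card_eq_choose [Fintype α] [DecidableEq α] [Field R] [LinearOrder R]
    [IsStrictOrderedRing R] {k : ℕ} (hk : 2 * k < Fintype.card α) :
    (subsetMatrix R (fun s : Finset α => #s = k) (#· = k + 1)).rank =
      (Fintype.card α).choose k := by
  have hc : (0 : R) < Fintype.card α - 2 * k := by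
    rw [sub_pos]
    exact_mod_cast hk
  rw [← rank_self_mul_transpose, subsetMatrix_mul_transpose_eq,
    rank_transpose_mul_self_add_smul_one _ hc, Fintype.card_finset_len]

theorem inclusionMatrix_full_rank (n r : ℕ) (hr1 : 1 ≤ r) (hr : 2 * r ≤ n + 1) :
    (inclusionMatrix n r).rank = Nat.choose n (r - 1) := by
  obtain ⟨k, rfl⟩ : ∃ k, r = k + 1 := ⟨r - 1, by omega⟩
  have hk : 2 * k < Fintype.card (Fin n) := by
    rw [Fintype.card_fin]
    omega
  exact (rank_subsetMatrix_card_eq_choose hk).trans (by rw [Fintype.card_fin]; rfl)
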